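/- arXiv:2103.04029 — 2 statements merged into one kernel-verified Lean document; each statement's English description precedes it below -/
import Mathlib

section
/- Consider ℤ with the metric d(x,y) = |x − y| and basepoint 0. Then σ(ℤ, 0), the set of σ-equivalence classes of coarse sequences in (ℤ, 0), has exactly two elements; representatives are given by the coarse sequences i ↦ i and i ↦ −i. -/
open Filter

/-- A coarse sequence in a pointed metric space `(X, ξ)`: a sequence with uniformly
bounded consecutive steps that diverges from `ξ` to infinity. -/
def IsCoarseSeqM {X : Type*} [PseudoMetricSpace X] (ξ : X) (s : ℕ → X) : Prop :=
  (∃ K : ℝ, ∀ i : ℕ, dist (s i) (s (i + 1)) ≤ K) ∧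
  Tendsto (fun i => dist ξ (s i)) atTop atTop

/-- `s` is a subsequence of `t`. -/
def IsSubseq {X : Type*} (s t : ℕ → X) : Prop :=
  ∃ k : ℕ → ℕ, StrictMono k ∧ ∀ i, s i = t (k i)

/-- σ-equivalence of coarse sequences: `s` and `t` are connected by a finite chain of
coarse sequences in which each consecutive pair is related by the subsequence relation. -/
def SigmaRelM {X : Type*} [PseudoMetricSpace X] (ξ : X) (s t : ℕ → X) : Prop :=
  ∃ (n : ℕ) (u : ℕ → ℕ → X), u 0 = s ∧ u n = t ∧ (∀ i ≤ n, IsCoarseSeqM ξ (u i)) ∧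
    ∀ i < n, IsSubseq (u i) (u (i + 1)) ∨ IsSubseq (u (i + 1)) (u i)

/-- `x` and `y` are connected inside `A` by a finite chain with steps of length `≤ K`. -/
def ChainM {X : Type*} [PseudoMetricSpace X] (K : ℝ) (A : Set X) (x y : X) : Prop :=
  ∃ (n : ℕ) (c : ℕ → X), c 0 = x ∧ c n = y ∧ (∀ i ≤ n, c i ∈ A) ∧
    ∀ i < n, dist (c i) (c (i + 1)) ≤ K

/-- ε-equivalence: there is `K > 0` such that for every `r > 0` there is `N` with the
tails `{s i : i ≥ N}` and `{t i : i ≥ N}` lying in the same `K`-connected component of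
`X \ {x : dist ξ x ≤ r}`. -/
def EpsRelM {X : Type*} [PseudoMetricSpace X] (ξ : X) (s t : ℕ → X) : Prop :=
  ∃ K > (0 : ℝ), ∀ r > (0 : ℝ), ∃ N : ℕ,
    ∀ x ∈ (s '' {i | N ≤ i}) ∪ (t '' {i | N ≤ i}),
    ∀ y ∈ (s '' {i | N ≤ i}) ∪ (t '' {i | N ≤ i}),
      ChainM K {z | r < dist ξ z} x y

/-- The set of coarse sequences in the pointed metric space `(X, ξ)`. -/
def CoarseSeqM {X : Type*} [PseudoMetricSpace X] (ξ : X) :=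
  {s : ℕ → X // IsCoarseSeqM ξ s}

/-- `σ(X, ξ)`: the quotient of the set of coarse sequences by σ-equivalence. -/
def SigmaQuotM {X : Type*} [PseudoMetricSpace X] (ξ : X) :=
  Quot (fun s t : CoarseSeqM ξ => SigmaRelM ξ s.1 t.1)

/-- `ε(X, ξ)`: the quotient of the set of coarse sequences by ε-equivalence. -/
def EpsQuotM {X : Type*} [PseudoMetricSpace X] (ξ : X) :=
  Quot (fun s t : CoarseSeqM ξ => EpsRelM ξ s.1 t.1)

-- helpers
lemma int_dist_le_of {a b M : ℤ} (h : |a - b| ≤ M) : dist a b ≤ (M : ℝ) := by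
  rw [Int.dist_eq, ← Int.cast_sub, ← Int.cast_abs]
  exact_mod_cast h

lemma int_dist_eq_abs (a b : ℤ) : dist a b = ((|a - b| : ℤ) : ℝ) := by
  rw [Int.dist_eq, ← Int.cast_sub, ← Int.cast_abs]

lemma coarse_id : IsCoarseSeqM (0 : ℤ) (fun i : ℕ => (i : ℤ)) := by
  constructor
  · refine ⟨1, fun i => le_trans (int_dist_le_of (M := 1) ?_) (by norm_num)⟩
    have : (i : ℤ) - (i + 1 : ℕ) = -1 := by push_cast; ring
    rw [this]; norm_num
  · apply tendsto_atTop_mono (fun i : ℕ => ?_) tendsto_natCast_atTop_atTop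
    rw [int_dist_eq_abs]
    push_cast
    simp

lemma coarse_neg {s : ℕ → ℤ} (hs : IsCoarseSeqM (0 : ℤ) s) :
    IsCoarseSeqM (0 : ℤ) (fun i => -(s i)) := by
  obtain ⟨⟨K, hK⟩, hdiv⟩ := hs
  refine ⟨⟨K, fun i => ?_⟩, ?_⟩
  · simpa [dist_neg_neg] using hK i
  · simpa [dist_zero_left, norm_neg] using hdiv

lemma coarse_neg_id : IsCoarseSeqM (0 : ℤ) (fun i : ℕ => -(i : ℤ)) :=
  coarse_neg coarse_id

lemma subseq_neg {s t : ℕ → ℤ} (h : IsSubseq s t) :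
    IsSubseq (fun i => -(s i)) (fun i => -(t i)) := by
  obtain ⟨k, hk, hks⟩ := h
  exact ⟨k, hk, fun i => by simp [hks i]⟩

lemma sigma_neg {s t : ℕ → ℤ} (h : SigmaRelM (0 : ℤ) s t) :
    SigmaRelM (0 : ℤ) (fun i => -(s i)) (fun i => -(t i)) := by
  obtain ⟨n, u, h0, hn, hc, hst⟩ := h
  refine ⟨n, fun j i => -(u j i), by funext i; show -u 0 i = -s i; rw [h0], by funext i; show -u n i = -t i; rw [hn], fun i hi => coarse_neg (hc i hi),
    fun i hi => ?_⟩
  rcases hst i hi with h | h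
  · exact Or.inl (subseq_neg h)
  · exact Or.inr (subseq_neg h)

/-- Sign dichotomy for coarse sequences in ℤ. -/
lemma sign_dichotomy {s : ℕ → ℤ} (hs : IsCoarseSeqM (0 : ℤ) s) :
    (∃ N, ∀ i, N ≤ i → 0 < s i) ∨ (∃ N, ∀ i, N ≤ i → s i < 0) := by
  obtain ⟨⟨K, hK⟩, hdiv⟩ := hs
  have hK0 : 0 ≤ K := le_trans dist_nonneg (hK 0)
  obtain ⟨N, hN⟩ := (hdiv.eventually_gt_atTop K).exists_forall_of_atTop
  have habs : ∀ i, N ≤ i → K < ((|s i| : ℤ) : ℝ) := by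
    intro i hi
    have := hN i hi
    rwa [show dist (0 : ℤ) (s i) = ((|s i| : ℤ) : ℝ) by
      rw [int_dist_eq_abs, zero_sub, abs_neg]] at this
  have hne : ∀ i, N ≤ i → s i ≠ 0 := by
    intro i hi h0
    have := habs i hi
    rw [h0] at this; simp at this; linarith
  have key : ∀ i, N ≤ i → (0 < s i ↔ 0 < s (i + 1)) := by
    intro i hi
    have h1 : K < ((|s i| : ℤ) : ℝ) := habs i hi
    have h2 : K < ((|s (i+1)| : ℤ) : ℝ) := habs (i+1) (le_trans hi (Nat.le_succ i))
    have h3 : dist (s i) (s (i+1)) ≤ K := hK i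
    rw [int_dist_eq_abs] at h3
    constructor
    · intro hp
      by_contra hq
      have hq' : s (i+1) < 0 := lt_of_le_of_ne (not_lt.mp hq) (hne (i+1) (le_trans hi (Nat.le_succ i)))
      have : |s i - s (i+1)| = s i - s (i+1) := abs_of_pos (by omega)
      have hcast : ((|s i| : ℤ) : ℝ) = ((s i : ℤ) : ℝ) := by rw [abs_of_pos hp]
      rw [this] at h3
      push_cast at h3 h1 hcast ⊢
      rw [hcast] at h1
      have : ((s (i+1) : ℤ) : ℝ) < 0 := by exact_mod_cast hq'
      linarith
    · intro hp
      by_contra hq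
      have hq' : s i < 0 := lt_of_le_of_ne (not_lt.mp hq) (hne i hi)
      have : |s i - s (i+1)| = -(s i - s (i+1)) := abs_of_neg (by omega)
      have hcast : ((|s (i+1)| : ℤ) : ℝ) = ((s (i+1) : ℤ) : ℝ) := by rw [abs_of_pos hp]
      rw [this] at h3
      push_cast at h3 h2 hcast ⊢
      rw [hcast] at h2
      have : ((s i : ℤ) : ℝ) < 0 := by exact_mod_cast hq'
      linarith
  have key2 : ∀ i, N ≤ i → (0 < s i ↔ 0 < s N) := by
    intro i hi
    induction i, hi using Nat.le_induction with
    | base => exact Iff.rfl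
    | succ n hn ih => exact (key n hn).symm.trans ih
  by_cases h : 0 < s N
  · exact Or.inl ⟨N, fun i hi => (key2 i hi).mpr h⟩
  · refine Or.inr ⟨N, fun i hi => ?_⟩
    have : ¬ 0 < s i := fun hp => h ((key2 i hi).mp hp)
    exact lt_of_le_of_ne (not_lt.mp this) (hne i hi)

lemma sigmaRel_id_of_eventually_pos {s : ℕ → ℤ} (hs : IsCoarseSeqM (0 : ℤ) s)
    {N : ℕ} (hpos : ∀ i, N ≤ i → 0 < s i) :
    SigmaRelM (0 : ℤ) s (fun i : ℕ => (i : ℤ)) := by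
  obtain ⟨⟨K, hK⟩, hdiv⟩ := id hs
  set M : ℤ := max ⌈K⌉ 1 with hMdef
  have hM1 : (1 : ℤ) ≤ M := le_max_right _ _
  have hstep : ∀ i, |s i - s (i + 1)| ≤ M := by
    intro i
    have h1 : dist (s i) (s (i + 1)) ≤ (M : ℝ) :=
      (hK i).trans (le_trans (Int.le_ceil K) (by exact_mod_cast le_max_left _ _))
    rw [int_dist_eq_abs] at h1
    exact_mod_cast h1
  have hex : ∀ m : ℕ, ∃ j, m < j ∧ s m < s j := by
    intro m
    have h1 : ∀ᶠ j in atTop, ((|s m| : ℤ) : ℝ) < dist 0 (s j) := hdiv.eventually_gt_atTop _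
    have h2 : ∀ᶠ j in atTop, max (m + 1) N ≤ j := eventually_ge_atTop _
    obtain ⟨j, hj1, hj2⟩ := (h1.and h2).exists
    have hjm : m < j := lt_of_lt_of_le (Nat.lt_succ_self m) (le_trans (le_max_left _ _) hj2)
    have hjN : N ≤ j := le_trans (le_max_right _ _) hj2
    have hpj : 0 < s j := hpos j hjN
    rw [show dist (0 : ℤ) (s j) = ((|s j| : ℤ) : ℝ) by
      rw [int_dist_eq_abs, zero_sub, abs_neg]] at hj1
    have habs : |s m| < |s j| := by exact_mod_cast hj1
    refine ⟨j, hjm, ?_⟩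
    have := le_abs_self (s m)
    have := abs_of_pos hpj
    omega
  let k : ℕ → ℕ := fun n => Nat.rec (motive := fun _ => ℕ) N (fun _ prev => Nat.find (hex prev)) n
  have hk0 : k 0 = N := rfl
  have hksucc : ∀ i, k (i + 1) = Nat.find (hex (k i)) := fun i => rfl
  have hklt : ∀ i, k i < k (i + 1) := fun i => by
    rw [hksucc]; exact (Nat.find_spec (hex (k i))).1
  have hslt : ∀ i, s (k i) < s (k (i + 1)) := fun i => by
    rw [hksucc]; exact (Nat.find_spec (hex (k i))).2
  have hkmono : StrictMono k := strictMono_nat_of_lt_succ hklt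
  set w : ℕ → ℤ := fun i => s (k i) with hw
  have hwmono : StrictMono w := strictMono_nat_of_lt_succ hslt
  have hw0 : 0 < w 0 := hpos N le_rfl
  have hwstep : ∀ i, w (i + 1) ≤ w i + M := by
    intro i
    have hj : k i < k (i + 1) := hklt i
    have hle : s (k (i + 1) - 1) ≤ w i := by
      rcases Nat.lt_or_ge (k i + 1) (k (i + 1)) with h | h
      · have hlt : k (i + 1) - 1 < Nat.find (hex (k i)) := by
          rw [← hksucc]; omega
        have hmin := Nat.find_min (hex (k i)) hlt
        push_neg at hmin
        exact hmin (by omega)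
      · have heq : k (i + 1) - 1 = k i := by omega
        rw [heq]
    have h2 := hstep (k (i + 1) - 1)
    have h3 : k (i + 1) - 1 + 1 = k (i + 1) := by omega
    rw [h3] at h2
    have h4 := abs_le.mp h2
    have : w (i + 1) = s (k (i + 1)) := rfl
    omega
  have hwC : IsCoarseSeqM (0 : ℤ) w := by
    constructor
    · refine ⟨(M : ℝ), fun i => int_dist_le_of ?_⟩
      have h1 := hwstep i
      have h2 : w i < w (i + 1) := hwmono (Nat.lt_succ_self i)
      have h3 : |w i - w (i + 1)| = w (i + 1) - w i := by
        rw [abs_sub_comm]; exact abs_of_pos (by omega)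
      omega
    · have hlb : ∀ i : ℕ, (i : ℤ) ≤ w i := by
        intro i
        induction i with
        | zero => simpa using hw0.le
        | succ n ih =>
          have : w n < w (n + 1) := hwmono (Nat.lt_succ_self n)
          push_cast
          omega
      apply tendsto_atTop_mono (fun i => ?_) tendsto_natCast_atTop_atTop
      rw [int_dist_eq_abs, zero_sub, abs_neg]
      calc (i : ℝ) ≤ ((w i : ℤ) : ℝ) := by exact_mod_cast hlb i
        _ ≤ ((|w i| : ℤ) : ℝ) := by exact_mod_cast le_abs_self _
  set v : ℕ → ℤ := fun i => w 0 + (i : ℤ) with hv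
  have hvC : IsCoarseSeqM (0 : ℤ) v := by
    constructor
    · refine ⟨1, fun i => le_trans (int_dist_le_of (M := 1) ?_) (by norm_num)⟩
      have : w 0 + (i : ℤ) - (w 0 + ((i + 1 : ℕ) : ℤ)) = -1 := by push_cast; ring
      rw [show v i - v (i + 1) = -1 from this]
      norm_num
    · apply tendsto_atTop_mono (fun i => ?_) tendsto_natCast_atTop_atTop
      rw [int_dist_eq_abs, zero_sub, abs_neg]
      have h1 : (i : ℤ) ≤ v i := by simp only [hv]; omega
      calc (i : ℝ) ≤ ((v i : ℤ) : ℝ) := by exact_mod_cast h1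
        _ ≤ ((|v i| : ℤ) : ℝ) := by exact_mod_cast le_abs_self _
  have hws : IsSubseq w s := ⟨k, hkmono, fun i => rfl⟩
  have hwv : IsSubseq w v := by
    refine ⟨fun i => (w i - w 0).toNat, ?_, ?_⟩
    · intro i j hij
      have h1 : w i < w j := hwmono hij
      have h2 : w 0 ≤ w i := hwmono.monotone (Nat.zero_le i)
      exact (Int.toNat_lt_toNat (by omega)).mpr (by omega)
    · intro i
      have h2 : 0 ≤ w i - w 0 := by
        have := hwmono.monotone (Nat.zero_le i); omega
      show w i = w 0 + ((w i - w 0).toNat : ℤ)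
      rw [Int.toNat_of_nonneg h2]
      ring
  have hvid : IsSubseq v (fun i : ℕ => (i : ℤ)) := by
    refine ⟨fun i => i + (w 0).toNat, fun i j hij => by dsimp only; omega, fun i => ?_⟩
    show w 0 + (i : ℤ) = ((i + (w 0).toNat : ℕ) : ℤ)
    push_cast [Int.toNat_of_nonneg hw0.le]
    ring
  refine ⟨3, fun j => match j with | 0 => s | 1 => w | 2 => v | _ => fun i => (i : ℤ),
    rfl, rfl, ?_, ?_⟩
  · intro i hi
    interval_cases i
    · exact hs
    · exact hwC
    · exact hvC
    · exact coarse_id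
  · intro i hi
    interval_cases i
    · exact Or.inr hws
    · exact Or.inl hwv
    · exact Or.inl hvid

lemma classify {s : ℕ → ℤ} (hs : IsCoarseSeqM (0 : ℤ) s) :
    SigmaRelM (0 : ℤ) s (fun i : ℕ => (i : ℤ)) ∨
      SigmaRelM (0 : ℤ) s (fun i : ℕ => -(i : ℤ)) := by
  rcases sign_dichotomy hs with ⟨N, h⟩ | ⟨N, h⟩
  · exact Or.inl (sigmaRel_id_of_eventually_pos hs h)
  · right
    have h1 : SigmaRelM (0 : ℤ) (fun i => -(s i)) (fun i : ℕ => (i : ℤ)) :=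
      sigmaRel_id_of_eventually_pos (coarse_neg hs)
        (N := N) (fun i hi => by simpa using h i hi)
    have h2 := sigma_neg h1
    simpa using h2

/-- Eventually positive. -/
def EvPosM (s : ℕ → ℤ) : Prop := ∃ N, ∀ i, N ≤ i → 0 < s i

lemma evPos_of_subseq {s t : ℕ → ℤ} (h : IsSubseq s t) (ht : EvPosM t) : EvPosM s := by
  obtain ⟨k, hk, hks⟩ := h
  obtain ⟨N, hN⟩ := ht
  exact ⟨N, fun i hi => by rw [hks i]; exact hN _ (le_trans hi hk.le_apply)⟩

lemma evNeg_of_subseq {s t : ℕ → ℤ} (h : IsSubseq s t)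
    (ht : ∃ N, ∀ i, N ≤ i → t i < 0) : ∃ N, ∀ i, N ≤ i → s i < 0 := by
  obtain ⟨k, hk, hks⟩ := h
  obtain ⟨N, hN⟩ := ht
  exact ⟨N, fun i hi => by rw [hks i]; exact hN _ (le_trans hi hk.le_apply)⟩

lemma not_evPos_of_evNeg {s : ℕ → ℤ} (h : ∃ N, ∀ i, N ≤ i → s i < 0) : ¬ EvPosM s := by
  rintro ⟨N, hN⟩
  obtain ⟨M, hM⟩ := h
  have h1 := hN (max N M) (le_max_left _ _)
  have h2 := hM (max N M) (le_max_right _ _)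
  omega

lemma evPos_iff_of_subseq {s t : ℕ → ℤ} (hsC : IsCoarseSeqM (0 : ℤ) s)
    (htC : IsCoarseSeqM (0 : ℤ) t) (h : IsSubseq s t) : EvPosM s ↔ EvPosM t := by
  constructor
  · intro hp
    rcases sign_dichotomy htC with hpos | hneg
    · exact hpos
    · exact absurd hp (not_evPos_of_evNeg (evNeg_of_subseq h hneg))
  · exact evPos_of_subseq h

lemma evPos_iff_of_sigmaRel {s t : ℕ → ℤ} (h : SigmaRelM (0 : ℤ) s t) :
    EvPosM s ↔ EvPosM t := by
  obtain ⟨n, u, h0, hn, hc, hst⟩ := h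
  have key : ∀ i ≤ n, (EvPosM (u 0) ↔ EvPosM (u i)) := by
    intro i hi
    induction i with
    | zero => exact Iff.rfl
    | succ m ih =>
      refine (ih (by omega)).trans ?_
      rcases hst m (by omega) with hsub | hsub
      · exact (evPos_iff_of_subseq (hc m (by omega)) (hc (m + 1) hi) hsub)
      · exact (evPos_iff_of_subseq (hc (m + 1) hi) (hc m (by omega)) hsub).symm
  rw [← h0, ← hn]
  exact key n le_rfl

lemma evPos_id : EvPosM (fun i : ℕ => (i : ℤ)) :=
  ⟨1, fun i hi => by show (0 : ℤ) < (i : ℤ); exact_mod_cast Nat.pos_of_ne_zero (by omega)⟩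

lemma not_evPos_neg_id : ¬ EvPosM (fun i : ℕ => -(i : ℤ)) := by
  rintro ⟨N, hN⟩
  have h1 : (0 : ℤ) < -(N : ℤ) := hN N le_rfl
  omega

/-- `σ(ℤ, 0)` has exactly two elements, represented by the coarse
sequences `i ↦ i` and `i ↦ -i`. -/
theorem sigmaQuot_int_two_elements :
    ∃ (h₁ : IsCoarseSeqM (0 : ℤ) (fun i : ℕ => (i : ℤ)))
      (h₂ : IsCoarseSeqM (0 : ℤ) (fun i : ℕ => -(i : ℤ))),
      (∀ q : SigmaQuotM (0 : ℤ),
        q = Quot.mk _ (⟨fun i : ℕ => (i : ℤ), h₁⟩ : CoarseSeqM (0 : ℤ)) ∨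
        q = Quot.mk _ (⟨fun i : ℕ => -(i : ℤ), h₂⟩ : CoarseSeqM (0 : ℤ))) ∧
      (Quot.mk _ (⟨fun i : ℕ => (i : ℤ), h₁⟩ : CoarseSeqM (0 : ℤ)) :
          SigmaQuotM (0 : ℤ)) ≠
        Quot.mk _ (⟨fun i : ℕ => -(i : ℤ), h₂⟩ : CoarseSeqM (0 : ℤ)) := by
  refine ⟨coarse_id, coarse_neg_id, ?_, ?_⟩
  · intro q
    induction q using Quot.ind with
    | _ a =>
    rcases classify a.2 with h | h
    · exact Or.inl (Quot.sound h)
    · exact Or.inr (Quot.sound h)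
  · intro hEq
    have hlift := congrArg
      (Quot.lift (fun a : CoarseSeqM (0 : ℤ) => EvPosM a.1)
        (fun a b hab => propext (evPos_iff_of_sigmaRel hab))) hEq
    exact not_evPos_neg_id (cast hlift evPos_id)
end

section
/- Let T be the full binary tree, i.e., the set of all finite sequences over {0,1}, with root the empty sequence and equipped with the tree metric. Then σ(T, root), the set of σ-equivalence classes of coarse sequences in (T, root), has cardinality 2^ℵ₀. -/
open Filter

/-- The length of the longest common prefix of two lists. -/
def commonPrefixLen : List ℕ → List ℕ → ℕ
  | a :: s, b :: t => if a = b then commonPrefixLen s t + 1 else 0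
  | _, _ => 0

/-- The tree metric on finite sequences: `d(s,t) = |s| + |t| - 2ℓ` where `ℓ` is the
length of the longest common prefix of `s` and `t`. -/
def treeDist (s t : List ℕ) : ℕ :=
  s.length + t.length - 2 * commonPrefixLen s t

/-- A rooted tree: a set of finite sequences containing the empty sequence and
closed under prefixes. -/
def IsTree (T : Set (List ℕ)) : Prop :=
  [] ∈ T ∧ ∀ l ∈ T, ∀ l' : List ℕ, l' <+: l → l' ∈ T

/-- A tree is finitely branching if every node has only finitely many one-step
extensions in the tree. -/
def FinitelyBranching (T : Set (List ℕ)) : Prop :=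
  ∀ l ∈ T, {n : ℕ | l ++ [n] ∈ T}.Finite

/-- `[T]`: the set of infinite branches of `T`. -/
def Branch (T : Set (List ℕ)) :=
  {f : ℕ → ℕ // ∀ n : ℕ, (List.ofFn fun i : Fin n => f i.1) ∈ T}

/-- A coarse sequence in the pointed metric space `(T, root)`: a sequence of nodes of
`T` with uniformly bounded consecutive steps that diverges from the root to infinity. -/
def IsCoarseSeqT (T : Set (List ℕ)) (s : ℕ → List ℕ) : Prop :=
  (∀ i : ℕ, s i ∈ T) ∧
  (∃ K : ℝ, ∀ i : ℕ, (treeDist (s i) (s (i + 1)) : ℝ) ≤ K) ∧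
  Tendsto (fun i => treeDist [] (s i)) atTop atTop

/-- σ-equivalence of coarse sequences in `(T, root)`. -/
def SigmaRelT (T : Set (List ℕ)) (s t : ℕ → List ℕ) : Prop :=
  ∃ (n : ℕ) (u : ℕ → ℕ → List ℕ), u 0 = s ∧ u n = t ∧ (∀ i ≤ n, IsCoarseSeqT T (u i)) ∧
    ∀ i < n, IsSubseq (u i) (u (i + 1)) ∨ IsSubseq (u (i + 1)) (u i)

/-- `x` and `y` are connected inside `A` by a finite chain with steps of tree
distance `≤ K`. -/
def ChainT (K : ℝ) (A : Set (List ℕ)) (x y : List ℕ) : Prop :=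
  ∃ (n : ℕ) (c : ℕ → List ℕ), c 0 = x ∧ c n = y ∧ (∀ i ≤ n, c i ∈ A) ∧
    ∀ i < n, (treeDist (c i) (c (i + 1)) : ℝ) ≤ K

/-- ε-equivalence of coarse sequences in `(T, root)`: there is `K > 0` such that for
every `r > 0` there is `N` with the tails of `s` and `t` lying in the same
`K`-connected component of `T \ {x : d(root, x) ≤ r}`. -/
def EpsRelT (T : Set (List ℕ)) (s t : ℕ → List ℕ) : Prop :=
  ∃ K > (0 : ℝ), ∀ r > (0 : ℝ), ∃ N : ℕ,
    ∀ x ∈ (s '' {i | N ≤ i}) ∪ (t '' {i | N ≤ i}),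
    ∀ y ∈ (s '' {i | N ≤ i}) ∪ (t '' {i | N ≤ i}),
      ChainT K {l : List ℕ | l ∈ T ∧ r < (treeDist [] l : ℝ)} x y

/-- The set of coarse sequences in `(T, root)`. -/
def CoarseSeqT (T : Set (List ℕ)) := {s : ℕ → List ℕ // IsCoarseSeqT T s}

/-- `σ(T, root)`: the quotient of the set of coarse sequences by σ-equivalence. -/
def SigmaQuotT (T : Set (List ℕ)) :=
  Quot (fun s t : CoarseSeqT T => SigmaRelT T s.1 t.1)

/-- `ε(T, root)`: the quotient of the set of coarse sequences by ε-equivalence. -/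
def EpsQuotT (T : Set (List ℕ)) :=
  Quot (fun s t : CoarseSeqT T => EpsRelT T s.1 t.1)

lemma commonPrefixLen_nil_left (l : List ℕ) : commonPrefixLen [] l = 0 := by
  cases l <;> rfl

lemma commonPrefixLen_cons (a b : ℕ) (s t : List ℕ) :
    commonPrefixLen (a :: s) (b :: t) =
      if a = b then commonPrefixLen s t + 1 else 0 := rfl

lemma treeDist_nil (l : List ℕ) : treeDist [] l = l.length := by
  simp [treeDist, commonPrefixLen_nil_left]

lemma commonPrefixLen_le_left : ∀ s t : List ℕ, commonPrefixLen s t ≤ s.length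
  | [], t => by simp [commonPrefixLen_nil_left]
  | a :: s, [] => by simp [commonPrefixLen]
  | a :: s, b :: t => by
    rw [commonPrefixLen_cons]
    split
    · simpa using commonPrefixLen_le_left s t
    · simp

lemma commonPrefixLen_le_right : ∀ s t : List ℕ, commonPrefixLen s t ≤ t.length
  | [], t => by simp [commonPrefixLen_nil_left]
  | a :: s, [] => by simp [commonPrefixLen]
  | a :: s, b :: t => by
    rw [commonPrefixLen_cons]
    split
    · simpa using commonPrefixLen_le_right s t
    · simp

lemma take_commonPrefixLen_eq : ∀ s t : List ℕ,
    s.take (commonPrefixLen s t) = t.take (commonPrefixLen s t)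
  | [], t => by simp [commonPrefixLen_nil_left]
  | a :: s, [] => by simp [commonPrefixLen]
  | a :: s, b :: t => by
    rw [commonPrefixLen_cons]
    split
    · rename_i h
      simp [h, take_commonPrefixLen_eq s t]
    · simp

lemma take_eq_of_le_cpl {s t : List ℕ} {m : ℕ} (h : m ≤ commonPrefixLen s t) :
    s.take m = t.take m := by
  calc s.take m = (s.take (commonPrefixLen s t)).take m := by
        rw [List.take_take, min_eq_left h]
    _ = (t.take (commonPrefixLen s t)).take m := by rw [take_commonPrefixLen_eq]
    _ = t.take m := by rw [List.take_take, min_eq_left h]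

lemma cpl_ge {s t : List ℕ} {m K : ℕ} (hd : treeDist s t ≤ K)
    (hs : m + K ≤ s.length) (ht : m + K ≤ t.length) :
    m ≤ commonPrefixLen s t := by
  have h1 := commonPrefixLen_le_left s t
  have h2 := commonPrefixLen_le_right s t
  unfold treeDist at hd
  omega

/-- Along a coarse sequence, the length-`m` prefix is eventually constant. -/
lemma coarse_eventual_take {T : Set (List ℕ)} {s : ℕ → List ℕ}
    (hs : IsCoarseSeqT T s) (m : ℕ) :
    ∃ N, ∀ i, N ≤ i → (s i).take m = (s N).take m := by
  obtain ⟨-, ⟨K, hK⟩, htend⟩ := hs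
  set K' : ℕ := ⌈K⌉₊ with hK'
  have hKnat : ∀ i, treeDist (s i) (s (i + 1)) ≤ K' := by
    intro i
    have : (treeDist (s i) (s (i + 1)) : ℝ) ≤ (K' : ℝ) := (hK i).trans (Nat.le_ceil K)
    exact_mod_cast this
  obtain ⟨N, hN⟩ := (Filter.tendsto_atTop.mp htend (m + K')).exists_forall_of_atTop
  refine ⟨N, fun i hi => ?_⟩
  induction i with
  | zero => simp_all
  | succ i ih =>
    rcases Nat.lt_or_ge N (i + 1) with h | h
    · have hi' : N ≤ i := by omega
      rw [← ih hi']
      have hlen1 : m + K' ≤ (s i).length := by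
        have := hN i hi'; rwa [treeDist_nil] at this
      have hlen2 : m + K' ≤ (s (i + 1)).length := by
        have := hN (i + 1) (by omega); rwa [treeDist_nil] at this
      exact (take_eq_of_le_cpl (cpl_ge (hKnat i) hlen1 hlen2)).symm
    · have : N = i + 1 := by omega
      rw [this]

/-- Eventual prefixes pass from a sequence to its subsequences. -/
lemma subseq_eventual {s t : ℕ → List ℕ} (h : IsSubseq s t) {m N : ℕ} {p : List ℕ}
    (ht : ∀ i, N ≤ i → (t i).take m = p) : ∀ i, N ≤ i → (s i).take m = p := by
  obtain ⟨k, hk, hks⟩ := h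
  intro i hi
  rw [hks i]
  exact ht (k i) (hi.trans hk.le_apply)

lemma eventual_unique {s : ℕ → List ℕ} {m N₁ N₂ : ℕ} {p q : List ℕ}
    (h1 : ∀ i, N₁ ≤ i → (s i).take m = p) (h2 : ∀ i, N₂ ≤ i → (s i).take m = q) :
    p = q := by
  rw [← h1 (max N₁ N₂) (le_max_left _ _), h2 (max N₁ N₂) (le_max_right _ _)]

/-- Eventual prefixes are invariant under σ-equivalence. -/
lemma sigma_eventual {T : Set (List ℕ)} {s t : ℕ → List ℕ} (h : SigmaRelT T s t)
    {m : ℕ} {p : List ℕ} (hs : ∃ N, ∀ i, N ≤ i → (s i).take m = p) :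
    ∃ N, ∀ i, N ≤ i → (t i).take m = p := by
  obtain ⟨n, u, h0, hn, hc, hstep⟩ := h
  have key : ∀ j, j ≤ n → ∃ N, ∀ i, N ≤ i → (u j i).take m = p := by
    intro j
    induction j with
    | zero => intro _; rw [h0]; exact hs
    | succ j ih =>
      intro hj
      have hj' : j < n := hj
      obtain ⟨N, hN⟩ := ih hj'.le
      rcases hstep j hj' with hsub | hsub
      · obtain ⟨N', hN'⟩ := coarse_eventual_take (hc (j + 1) hj) m
        have hdown := subseq_eventual hsub hN'
        have : (u (j + 1) N').take m = p := eventual_unique hdown hN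
        exact ⟨N', fun i hi => (hN' i hi).trans this⟩
      · obtain ⟨N', hN'⟩ := coarse_eventual_take (hc (j + 1) hj) m
        have hdown := subseq_eventual hsub hN
        exact ⟨N, hdown⟩
  have := key n le_rfl
  rwa [hn] at this

/-- The σ-invariant: the set of eventual truncations of a sequence. -/
def evSet (s : ℕ → List ℕ) : Set (ℕ × List ℕ) :=
  {q | ∃ N, ∀ i, N ≤ i → (s i).take q.1 = q.2}

lemma evSet_eq {T : Set (List ℕ)} {s t : ℕ → List ℕ} (hs : IsCoarseSeqT T s)
    (ht : IsCoarseSeqT T t) (h : SigmaRelT T s t) : evSet s = evSet t := by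
  apply Set.Subset.antisymm
  · intro q hq
    exact sigma_eventual h hq
  · rintro ⟨m, p⟩ hq
    obtain ⟨N, hN⟩ := coarse_eventual_take hs m
    obtain ⟨N', hN'⟩ := sigma_eventual h ⟨N, hN⟩
    obtain ⟨N'', hN''⟩ := hq
    have : (s N).take m = p := eventual_unique hN' hN''
    exact ⟨N, fun i hi => (hN i hi).trans this⟩

/-- The branch sequence associated to `f : ℕ → Fin 2`. -/
def branchSeq (f : ℕ → Fin 2) (i : ℕ) : List ℕ :=
  (List.range i).map (fun j => (f j : ℕ))

lemma branchSeq_length (f : ℕ → Fin 2) (i : ℕ) : (branchSeq f i).length = i := by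
  simp [branchSeq]

lemma branchSeq_take (f : ℕ → Fin 2) {m i : ℕ} (h : m ≤ i) :
    (branchSeq f i).take m = branchSeq f m := by
  simp [branchSeq, ← List.map_take, List.take_range, min_eq_left h]

lemma cpl_self_append : ∀ (l t : List ℕ), commonPrefixLen l (l ++ t) = l.length
  | [], t => by simp [commonPrefixLen_nil_left]
  | a :: l, t => by
    rw [List.cons_append, commonPrefixLen_cons, if_pos rfl, cpl_self_append l t]
    simp

lemma branchSeq_coarse (f : ℕ → Fin 2) :
    IsCoarseSeqT {l : List ℕ | ∀ n ∈ l, n < 2} (branchSeq f) := by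
  refine ⟨?_, ⟨1, ?_⟩, ?_⟩
  · intro i n hn
    simp only [branchSeq, List.mem_map] at hn
    obtain ⟨j, -, rfl⟩ := hn
    exact (f j).isLt
  · intro i
    have h1 : branchSeq f (i + 1) = branchSeq f i ++ [(f i : ℕ)] := by
      simp [branchSeq, List.range_succ]
    have : treeDist (branchSeq f i) (branchSeq f (i + 1)) = 1 := by
      rw [h1, treeDist, cpl_self_append]
      simp [branchSeq_length]
      omega
    rw [this]; norm_num
  · have : (fun i => treeDist [] (branchSeq f i)) = fun i => i := by
      funext i; rw [treeDist_nil, branchSeq_length]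
    rw [this]
    exact tendsto_id

lemma branchSeq_injective_of_evSet {f g : ℕ → Fin 2}
    (h : evSet (branchSeq f) = evSet (branchSeq g)) : f = g := by
  funext m
  have hf : (m + 1, branchSeq f (m + 1)) ∈ evSet (branchSeq f) :=
    ⟨m + 1, fun i hi => branchSeq_take f hi⟩
  rw [h] at hf
  obtain ⟨N, hN⟩ := hf
  have hg : (branchSeq g (max N (m + 1))).take (m + 1) = branchSeq g (m + 1) :=
    branchSeq_take g (le_max_right _ _)
  have := hN (max N (m + 1)) (le_max_left _ _)
  rw [hg] at this
  have heq : branchSeq g (m + 1) = branchSeq f (m + 1) := this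
  simp only [branchSeq, List.map_inj_left] at heq
  have := heq m (by simp [List.mem_range])
  exact (Fin.val_injective this).symm

/-- for the full binary tree `T` (all finite sequences over `{0,1}`),
`σ(T, root)` has cardinality `2 ^ ℵ₀`. -/
theorem sigmaQuot_binary_tree_continuum :
    Cardinal.mk (SigmaQuotT {l : List ℕ | ∀ n ∈ l, n < 2}) =
      2 ^ Cardinal.aleph0 := by
  set T : Set (List ℕ) := {l : List ℕ | ∀ n ∈ l, n < 2} with hT
  apply le_antisymm
  · calc Cardinal.mk (SigmaQuotT T)
        ≤ Cardinal.mk (CoarseSeqT T) :=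
          Cardinal.mk_le_of_surjective (Quot.exists_rep)
      _ ≤ Cardinal.mk (ℕ → List ℕ) := Cardinal.mk_subtype_le _
      _ = 2 ^ Cardinal.aleph0 := by
          rw [Cardinal.mk_arrow]
          simp [Cardinal.mk_list_eq_aleph0, Cardinal.power_self_eq le_rfl]
  · have : Cardinal.mk (ℕ → Fin 2) ≤ Cardinal.mk (SigmaQuotT T) := by
      refine Cardinal.mk_le_of_injective (f := fun f : ℕ → Fin 2 =>
        (Quot.mk _ ⟨branchSeq f, branchSeq_coarse f⟩ : SigmaQuotT T)) ?_
      intro f g hfg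
      exact branchSeq_injective_of_evSet (congrArg
        (Quot.lift (fun s : CoarseSeqT T => evSet s.1)
          (fun s t h => evSet_eq s.2 t.2 h) : SigmaQuotT T → Set (ℕ × List ℕ)) hfg)
    refine le_trans ?_ this
    simp [Cardinal.mk_arrow]
end
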